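/- arXiv:1704.02701 — 3 statements merged into one kernel-verified Lean document; each statement's English description precedes it below -/
import Mathlib

section
/- For every positive integer n, the ratio of Gamma function products ∏_{j=0}^{n-1} [Γ((n+3+j)/2)Γ(1/2) / (Γ((4+j)/2)Γ((1+j)/2)Γ((2+j)/2))] divided by ∏_{j=0}^{n-1} [Γ((n+2+j)/2)Γ(1/2) / (Γ((1+j)/2)Γ((1+j)/2)Γ((4+j)/2))] equals Γ((2n+2)/2)Γ(1/2) / (Γ((n+2)/2)Γ((n+1)/2)), which equals 2^n. -/
/-!
Each factor of the quotient collapses to `F (j + 1) / F j` with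
`F j = Γ((n + 2 + j) / 2) / Γ((1 + j) / 2)`, so the product telescopes to `F n / F 0`, which is the
stated Gamma ratio. Legendre's duplication formula at `s = (n + 1) / 2` evaluates it as `2 ^ n`.
-/

open Real Finset

theorem Finset.prod_range_div_of_ne_zero {G : Type*} [CommGroupWithZero G] (f : ℕ → G)
    (hf : ∀ i, f i ≠ 0) (n : ℕ) : ∏ i ∈ range n, f (i + 1) / f i = f n / f 0 := by
  simpa using congrArg Units.val (prod_range_div (fun i ↦ Units.mk0 (f i) (hf i)) n)

theorem Real.Gamma_two_mul_mul_Gamma_one_half_div {s : ℝ} (hs : 0 < s) :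
    Gamma (2 * s) * Gamma (1 / 2) / (Gamma (s + 1 / 2) * Gamma s) = 2 ^ (2 * s - 1) := by
  have hΓs := (Gamma_pos_of_pos hs).ne'
  have hΓs' := (Gamma_pos_of_pos (by positivity : 0 < s + 1 / 2)).ne'
  rw [div_eq_iff (mul_ne_zero hΓs' hΓs), mul_comm (Gamma (s + 1 / 2)), Gamma_mul_Gamma_add_half,
    Gamma_one_half_eq, rpow_sub two_pos, rpow_sub two_pos, rpow_one]
  field_simp

theorem stmt0_general (n : ℕ) :
    (∏ j ∈ Finset.range n,
        Real.Gamma (((n : ℝ) + 3 + j) / 2) * Real.Gamma (1 / 2) /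
          (Real.Gamma ((4 + (j : ℝ)) / 2) * Real.Gamma ((1 + (j : ℝ)) / 2) *
            Real.Gamma ((2 + (j : ℝ)) / 2))) /
      (∏ j ∈ Finset.range n,
        Real.Gamma (((n : ℝ) + 2 + j) / 2) * Real.Gamma (1 / 2) /
          (Real.Gamma ((1 + (j : ℝ)) / 2) * Real.Gamma ((1 + (j : ℝ)) / 2) *
            Real.Gamma ((4 + (j : ℝ)) / 2))) =
      Real.Gamma ((2 * (n : ℝ) + 2) / 2) * Real.Gamma (1 / 2) /
        (Real.Gamma (((n : ℝ) + 2) / 2) * Real.Gamma (((n : ℝ) + 1) / 2)) ∧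
    Real.Gamma ((2 * (n : ℝ) + 2) / 2) * Real.Gamma (1 / 2) /
        (Real.Gamma (((n : ℝ) + 2) / 2) * Real.Gamma (((n : ℝ) + 1) / 2)) = 2 ^ n := by
  have hΓ : ∀ x : ℝ, 0 < x → Gamma x ≠ 0 := fun x hx ↦ (Gamma_pos_of_pos hx).ne'
  set F : ℕ → ℝ := fun j ↦ Gamma (((n : ℝ) + 2 + j) / 2) / Gamma ((1 + (j : ℝ)) / 2)
  have hF : ∀ j, F j ≠ 0 := fun j ↦ div_ne_zero (hΓ _ (by positivity)) (hΓ _ (by positivity))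
  have hfactor : ∀ j : ℕ,
      Gamma (((n : ℝ) + 3 + j) / 2) * Gamma (1 / 2) /
          (Gamma ((4 + (j : ℝ)) / 2) * Gamma ((1 + (j : ℝ)) / 2) * Gamma ((2 + (j : ℝ)) / 2)) /
        (Gamma (((n : ℝ) + 2 + j) / 2) * Gamma (1 / 2) /
          (Gamma ((1 + (j : ℝ)) / 2) * Gamma ((1 + (j : ℝ)) / 2) * Gamma ((4 + (j : ℝ)) / 2))) =
        F (j + 1) / F j := by
    intro j
    simp only [F, Nat.cast_succ]
    rw [show (n : ℝ) + 2 + (j + 1) = n + 3 + j by ring, show 1 + ((j : ℝ) + 1) = 2 + j by ring]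
    have := hΓ (1 / 2) (by norm_num)
    have := hΓ ((4 + (j : ℝ)) / 2) (by positivity)
    have := hΓ ((1 + (j : ℝ)) / 2) (by positivity)
    have := hΓ ((2 + (j : ℝ)) / 2) (by positivity)
    have := hΓ (((n : ℝ) + 2 + j) / 2) (by positivity)
    field_simp
  have hratio := Gamma_two_mul_mul_Gamma_one_half_div (s := ((n : ℝ) + 1) / 2) (by positivity)
  rw [show 2 * (((n : ℝ) + 1) / 2) = (2 * n + 2) / 2 by ring,
    show ((n : ℝ) + 1) / 2 + 1 / 2 = (n + 2) / 2 by ring,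
    show (2 * n + 2) / 2 - 1 = ((n : ℕ) : ℝ) by ring, rpow_natCast] at hratio
  refine ⟨?_, hratio⟩
  rw [← prod_div_distrib, prod_congr rfl fun j _ ↦ hfactor j, prod_range_div_of_ne_zero F hF]
  simp only [F, Nat.cast_zero, add_zero]
  rw [show (n : ℝ) + 2 + n = 2 * n + 2 by ring, show (1 : ℝ) + n = n + 1 by ring, div_div_div_eq]
  ring

/-- ratio of Gamma products equals Γ((2n+2)/2)Γ(1/2)/(Γ((n+2)/2)Γ((n+1)/2)),
which equals 2^n. -/
theorem stmt0 (n : ℕ) (hn : 0 < n) :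
    (∏ j ∈ Finset.range n,
        Real.Gamma (((n : ℝ) + 3 + j) / 2) * Real.Gamma (1 / 2) /
          (Real.Gamma ((4 + (j : ℝ)) / 2) * Real.Gamma ((1 + (j : ℝ)) / 2) *
            Real.Gamma ((2 + (j : ℝ)) / 2))) /
      (∏ j ∈ Finset.range n,
        Real.Gamma (((n : ℝ) + 2 + j) / 2) * Real.Gamma (1 / 2) /
          (Real.Gamma ((1 + (j : ℝ)) / 2) * Real.Gamma ((1 + (j : ℝ)) / 2) *
            Real.Gamma ((4 + (j : ℝ)) / 2))) =
      Real.Gamma ((2 * (n : ℝ) + 2) / 2) * Real.Gamma (1 / 2) /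
        (Real.Gamma (((n : ℝ) + 2) / 2) * Real.Gamma (((n : ℝ) + 1) / 2)) ∧
    Real.Gamma ((2 * (n : ℝ) + 2) / 2) * Real.Gamma (1 / 2) /
        (Real.Gamma (((n : ℝ) + 2) / 2) * Real.Gamma (((n : ℝ) + 1) / 2)) = 2 ^ n :=
  stmt0_general n
end

section
/- For every positive integer n, (1/n!) · ∏_{j=0}^{n-1} [Γ((n+3+j)/2)·Γ(1/2) / (Γ((4+j)/2)·Γ((1+j)/2)·Γ((2+j)/2))] = ∏_{k=1}^{n} Cat(k), where Cat(k) = (1/(k+1))·binomial(2k, k) is the k-th Catalan number. -/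
/-!
Induction on `n`, both sides being `1` at `n = 0`. Let `G n` be the product of Gamma quotients.
Passing from `n` to `n + 1` shifts the numerators `Γ((n + 3 + j) / 2)` by one half-step, so
`G (n + 1) / G n` involves only the boundary values `Γ((n + 3) / 2)`, `Γ((2n + 3) / 2)`,
`Γ((2n + 4) / 2)` and the new denominator. These group into consecutive half-integer pairs, and
Legendre duplication `Γ((j + 1) / 2) Γ((j + 2) / 2) = √π j! / 2 ^ j` gives
`G (n + 1) / G n = (2n + 2)! / ((n + 2)! n!) = (n + 1) Cat(n + 1)`.
-/

open Real Finset

/-- The k-th Catalan number as a real number: Cat(k) = (1/(k+1))·C(2k,k). -/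
noncomputable def catR (k : ℕ) : ℝ := (1 / ((k : ℝ) + 1)) * (Nat.choose (2 * k) k : ℝ)

theorem Finset.prod_range_succ_add_mul {M : Type*} [CommMonoid M] (f : ℕ → M) (n : ℕ) :
    (∏ j ∈ range (n + 1), f (n + 1 + j)) * f n =
      (∏ j ∈ range n, f (n + j)) * (f (2 * n) * f (2 * n + 1)) := by
  have shift : (∏ j ∈ range n, f (n + 1 + j)) * f n = (∏ j ∈ range n, f (n + j)) * f (2 * n) := by
    calc (∏ j ∈ range n, f (n + 1 + j)) * f n = ∏ j ∈ range (n + 1), f (n + j) := by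
          rw [prod_range_succ', add_zero]
          simp only [add_right_comm n 1, add_assoc]
      _ = (∏ j ∈ range n, f (n + j)) * f (2 * n) := by rw [prod_range_succ, two_mul]
  rw [prod_range_succ, mul_right_comm, shift, show n + 1 + n = 2 * n + 1 by ring, mul_assoc]

theorem catR_mul_factorial_mul_factorial (k : ℕ) :
    catR k * k.factorial * (k + 1).factorial = (2 * k).factorial := by
  have h := Nat.choose_mul_factorial_mul_factorial (show k ≤ 2 * k by omega)
  rw [show 2 * k - k = k by omega] at h
  rw [catR, Nat.factorial_succ, ← h]
  push_cast
  field_simp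

theorem Real.Gamma_half_mul_Gamma_half_succ (j : ℕ) :
    Gamma ((1 + (j : ℝ)) / 2) * Gamma ((2 + (j : ℝ)) / 2) = √π * j.factorial / 2 ^ j := by
  have h := Gamma_mul_Gamma_add_half ((1 + (j : ℝ)) / 2)
  rw [show (1 + (j : ℝ)) / 2 + 1 / 2 = (2 + (j : ℝ)) / 2 by ring,
    show 2 * ((1 + (j : ℝ)) / 2) = (j : ℝ) + 1 by ring,
    show 1 - ((j : ℝ) + 1) = -(j : ℝ) by ring] at h
  rw [h, Gamma_nat_eq_factorial, rpow_neg zero_le_two, rpow_natCast]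
  ring

noncomputable def gammaProd (n : ℕ) : ℝ :=
  ∏ j ∈ range n,
    Gamma (((n : ℝ) + 3 + j) / 2) * Gamma (1 / 2) /
      (Gamma ((4 + (j : ℝ)) / 2) * Gamma ((1 + (j : ℝ)) / 2) * Gamma ((2 + (j : ℝ)) / 2))

theorem gammaProd_succ_mul (n : ℕ) :
    gammaProd (n + 1) * Gamma (((n : ℝ) + 3) / 2) =
      gammaProd n *
        (Gamma ((1 + ((2 * n + 2 : ℕ) : ℝ)) / 2) * Gamma ((2 + ((2 * n + 2 : ℕ) : ℝ)) / 2)) *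
        (Gamma (1 / 2) /
          (Gamma ((4 + (n : ℝ)) / 2) * Gamma ((1 + (n : ℝ)) / 2) * Gamma ((2 + (n : ℝ)) / 2))) := by
  set num : ℕ → ℝ := fun m => Gamma (((m : ℝ) + 3) / 2)
  set den : ℕ → ℝ := fun j => Gamma (1 / 2) /
    (Gamma ((4 + (j : ℝ)) / 2) * Gamma ((1 + (j : ℝ)) / 2) * Gamma ((2 + (j : ℝ)) / 2))
  have split : ∀ m, gammaProd m = (∏ j ∈ range m, num (m + j)) * ∏ j ∈ range m, den j := by
    intro m
    rw [gammaProd, ← prod_mul_distrib]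
    refine prod_congr rfl fun j _ => ?_
    simp only [num, den, mul_div_assoc]
    push_cast
    ring_nf
  have hnum : num (2 * n) * num (2 * n + 1) =
      Gamma ((1 + ((2 * n + 2 : ℕ) : ℝ)) / 2) * Gamma ((2 + ((2 * n + 2 : ℕ) : ℝ)) / 2) := by
    simp only [num]
    push_cast
    ring_nf
  rw [split, split, prod_range_succ den, ← hnum]
  linear_combination ((∏ j ∈ range n, den j) * den n) * prod_range_succ_add_mul num n

theorem gammaProd_succ_mul_factorial (n : ℕ) :
    gammaProd (n + 1) * ((n + 2).factorial * n.factorial) = gammaProd n * (2 * n + 2).factorial := by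
  have h := gammaProd_succ_mul n
  have hmid := Gamma_half_mul_Gamma_half_succ (n + 2)
  rw [Nat.cast_add, Nat.cast_two, show (1 + ((n : ℝ) + 2)) / 2 = ((n : ℝ) + 3) / 2 by ring,
    show (2 + ((n : ℝ) + 2)) / 2 = (4 + (n : ℝ)) / 2 by ring] at hmid
  rw [Gamma_half_mul_Gamma_half_succ, Gamma_one_half_eq, mul_assoc (Gamma _),
    Gamma_half_mul_Gamma_half_succ] at h
  have h' : gammaProd (n + 1) * (Gamma (((n : ℝ) + 3) / 2) * Gamma ((4 + (n : ℝ)) / 2)) =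
      gammaProd n * (√π * (2 * n + 2).factorial / 2 ^ (2 * n + 2)) * (2 ^ n / n.factorial) := by
    rw [← mul_assoc, h]
    field_simp
  rw [hmid] at h'
  field_simp at h'
  rw [show (2 : ℝ) ^ (2 * n + 2) = 2 ^ (n + 2) * 2 ^ n by ring] at h'
  refine mul_left_cancel₀ (by positivity : (2 : ℝ) ^ (n + 2) * 2 ^ n ≠ 0) ?_
  linear_combination h'

theorem one_div_factorial_mul_gammaProd_succ (n : ℕ) :
    1 / ((n + 1).factorial : ℝ) * gammaProd (n + 1) =
      1 / (n.factorial : ℝ) * gammaProd n * catR (n + 1) := by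
  have hgamma := gammaProd_succ_mul_factorial n
  rw [show 2 * n + 2 = 2 * (n + 1) by ring, ← catR_mul_factorial_mul_factorial] at hgamma
  have hcancel : gammaProd (n + 1) * n.factorial = gammaProd n * catR (n + 1) * (n + 1).factorial :=
    mul_right_cancel₀ (by positivity : ((n + 2).factorial : ℝ) ≠ 0) (by linear_combination hgamma)
  field_simp
  linear_combination hcancel

theorem stmt2_general (n : ℕ) :
    (1 / (n.factorial : ℝ)) *
      ∏ j ∈ Finset.range n,
        Real.Gamma (((n : ℝ) + 3 + j) / 2) * Real.Gamma (1 / 2) /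
          (Real.Gamma ((4 + (j : ℝ)) / 2) * Real.Gamma ((1 + (j : ℝ)) / 2) *
            Real.Gamma ((2 + (j : ℝ)) / 2)) =
      ∏ k ∈ Finset.Icc 1 n, catR k := by
  induction n with
  | zero => simp
  | succ n ih =>
    rw [prod_Icc_succ_top (by omega), ← ih]
    exact one_div_factorial_mul_gammaProd_succ n

/-- (1/n!)·∏_{j=0}^{n-1} Γ((n+3+j)/2)Γ(1/2)/(Γ((4+j)/2)Γ((1+j)/2)Γ((2+j)/2))
equals the product of the first n Catalan numbers. -/
theorem stmt2 (n : ℕ) (hn : 0 < n) :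
    (1 / (n.factorial : ℝ)) *
      ∏ j ∈ Finset.range n,
        Real.Gamma (((n : ℝ) + 3 + j) / 2) * Real.Gamma (1 / 2) /
          (Real.Gamma ((4 + (j : ℝ)) / 2) * Real.Gamma ((1 + (j : ℝ)) / 2) *
            Real.Gamma ((2 + (j : ℝ)) / 2)) =
      ∏ k ∈ Finset.Icc 1 n, catR k :=
  stmt2_general n
end

section
/- For every positive integer n, (2^{n²+n}/n!) · ∏_{j=0}^{n-1} [Γ((n+3+j)/2)·Γ(1/2) / (Γ((2+j)/2)·Γ((1+j)/2)·Γ((4+j)/2))] = 2^{n²+n} · ∏_{k=1}^{n} Cat(k). -/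
open Real Finset
open scoped Nat

lemma Gamma_half_mul_Gamma_half_add_one (m : ℕ) :
    Gamma (((m : ℝ) + 1) / 2) * Gamma (((m : ℝ) + 2) / 2) = m ! / 2 ^ m * √π := by
  have h := Gamma_mul_Gamma_add_half (((m : ℝ) + 1) / 2)
  rw [show ((m : ℝ) + 1) / 2 + 1 / 2 = ((m : ℝ) + 2) / 2 by ring,
    show 2 * (((m : ℝ) + 1) / 2) = (m : ℝ) + 1 by ring,
    show (1 : ℝ) - ((m : ℝ) + 1) = -(m : ℝ) by ring,
    rpow_neg zero_le_two, rpow_natCast, Gamma_nat_eq_factorial] at h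
  rw [h, div_eq_mul_inv]

lemma succ_mul_catR_succ (n : ℕ) :
    ((n : ℝ) + 1) * catR (n + 1) = (2 * n + 2)! / (n ! * (n + 2)!) := by
  rw [catR, show 2 * (n + 1) = 2 * n + 2 by ring,
    Nat.cast_choose ℝ (by omega : n + 1 ≤ 2 * n + 2), show 2 * n + 2 - (n + 1) = n + 1 by omega,
    Nat.factorial_succ (n + 1), Nat.factorial_succ n]
  push_cast
  field_simp

noncomputable def gammaNumProd (n : ℕ) : ℝ := ∏ j ∈ range n, Gamma (((n : ℝ) + 3 + j) / 2)

noncomputable def gammaDen (j : ℕ) : ℝ :=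
  Gamma ((2 + (j : ℝ)) / 2) * Gamma ((1 + (j : ℝ)) / 2) * Gamma ((4 + (j : ℝ)) / 2) / Gamma (1 / 2)

lemma gammaNumProd_succ_mul (n : ℕ) :
    gammaNumProd (n + 1) * Gamma (((n : ℝ) + 3) / 2) =
      gammaNumProd n * (Gamma ((2 * (n : ℝ) + 3) / 2) * Gamma ((2 * (n : ℝ) + 4) / 2)) := by
  have hsucc : gammaNumProd (n + 1) =
      (∏ j ∈ range n, Gamma (((n : ℝ) + 4 + j) / 2)) * Gamma ((2 * (n : ℝ) + 4) / 2) := by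
    rw [gammaNumProd, prod_range_succ]
    push_cast
    ring_nf
  have hself : gammaNumProd n * Gamma ((2 * (n : ℝ) + 3) / 2) =
      (∏ j ∈ range n, Gamma (((n : ℝ) + 4 + j) / 2)) * Gamma (((n : ℝ) + 3) / 2) := by
    rw [gammaNumProd, show 2 * (n : ℝ) + 3 = n + 3 + n by ring, ← prod_range_succ
      (fun j : ℕ => Gamma (((n : ℝ) + 3 + j) / 2)), prod_range_succ']
    push_cast
    ring_nf
  rw [hsucc, ← mul_assoc, hself]
  ring

lemma Gamma_mul_gammaDen (n : ℕ) :
    Gamma (((n : ℝ) + 3) / 2) * gammaDen n = n ! * (n + 2)! / 2 ^ (2 * n + 2) * √π := by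
  have h₀ := Gamma_half_mul_Gamma_half_add_one n
  have h₂ := Gamma_half_mul_Gamma_half_add_one (n + 2)
  push_cast at h₂
  rw [show ((n : ℝ) + 2 + 1) / 2 = (n + 3) / 2 by ring,
    show ((n : ℝ) + 2 + 2) / 2 = (n + 4) / 2 by ring] at h₂
  rw [gammaDen, Gamma_one_half_eq, add_comm (2 : ℝ), add_comm (1 : ℝ), add_comm (4 : ℝ)]
  calc Gamma (((n : ℝ) + 3) / 2) * (Gamma ((n + 2) / 2) * Gamma ((n + 1) / 2) *
        Gamma ((n + 4) / 2) / √π)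
      = (Gamma (((n : ℝ) + 1) / 2) * Gamma ((n + 2) / 2)) *
          (Gamma ((n + 3) / 2) * Gamma ((n + 4) / 2)) / √π := by ring
    _ = n ! * (n + 2)! / 2 ^ (2 * n + 2) * √π := by
      rw [h₀, h₂]
      field_simp
      ring

lemma Gamma_mul_Gamma_div_Gamma_mul_gammaDen (n : ℕ) :
    Gamma ((2 * (n : ℝ) + 3) / 2) * Gamma ((2 * (n : ℝ) + 4) / 2) /
      (Gamma (((n : ℝ) + 3) / 2) * gammaDen n) = ((n : ℝ) + 1) * catR (n + 1) := by
  have h := Gamma_half_mul_Gamma_half_add_one (2 * n + 2)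
  push_cast at h
  rw [show (2 * (n : ℝ) + 2 + 1) / 2 = (2 * n + 3) / 2 by ring,
    show (2 * (n : ℝ) + 2 + 2) / 2 = (2 * n + 4) / 2 by ring] at h
  rw [h, Gamma_mul_gammaDen, succ_mul_catR_succ]
  field_simp

lemma gammaDen_pos (j : ℕ) : 0 < gammaDen j := by
  unfold gammaDen
  positivity

lemma gammaNumProd_div_prod_gammaDen (n : ℕ) :
    gammaNumProd n / ∏ j ∈ range n, gammaDen j = n ! * ∏ k ∈ Icc 1 n, catR k := by
  induction n with
  | zero => simp [gammaNumProd]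
  | succ n ih =>
    have hG : Gamma (((n : ℝ) + 3) / 2) ≠ 0 := (Gamma_pos_of_pos (by positivity)).ne'
    have hP : ∏ j ∈ range n, gammaDen j ≠ 0 := (prod_pos fun j _ => gammaDen_pos j).ne'
    have hd : gammaDen n ≠ 0 := (gammaDen_pos n).ne'
    calc gammaNumProd (n + 1) / ∏ j ∈ range (n + 1), gammaDen j
        = gammaNumProd n / (∏ j ∈ range n, gammaDen j) *
            (Gamma ((2 * (n : ℝ) + 3) / 2) * Gamma ((2 * (n : ℝ) + 4) / 2) /
              (Gamma (((n : ℝ) + 3) / 2) * gammaDen n)) := by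
          rw [prod_range_succ, div_mul_div_comm, ← gammaNumProd_succ_mul]
          field_simp
      _ = n ! * (∏ k ∈ Icc 1 n, catR k) * (((n : ℝ) + 1) * catR (n + 1)) := by
          rw [ih, Gamma_mul_Gamma_div_Gamma_mul_gammaDen]
      _ = (n + 1)! * ∏ k ∈ Icc 1 (n + 1), catR k := by
          rw [prod_Icc_succ_top (by omega), Nat.factorial_succ]
          push_cast
          ring

lemma prod_Gamma_ratio_eq_gammaNumProd_div (n : ℕ) :
    ∏ j ∈ range n, Gamma (((n : ℝ) + 3 + j) / 2) * Gamma (1 / 2) /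
        (Gamma ((2 + (j : ℝ)) / 2) * Gamma ((1 + (j : ℝ)) / 2) * Gamma ((4 + (j : ℝ)) / 2)) =
      gammaNumProd n / ∏ j ∈ range n, gammaDen j := by
  rw [gammaNumProd, ← prod_div_distrib]
  exact prod_congr rfl fun j _ => by rw [gammaDen, div_div_eq_mul_div]

theorem stmt4_general (n : ℕ) :
    ((2 : ℝ) ^ (n ^ 2 + n) / (n.factorial : ℝ)) *
      ∏ j ∈ Finset.range n,
        Real.Gamma (((n : ℝ) + 3 + j) / 2) * Real.Gamma (1 / 2) /
          (Real.Gamma ((2 + (j : ℝ)) / 2) * Real.Gamma ((1 + (j : ℝ)) / 2) *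
            Real.Gamma ((4 + (j : ℝ)) / 2)) =
      (2 : ℝ) ^ (n ^ 2 + n) * ∏ k ∈ Finset.Icc 1 n, catR k := by
  rw [prod_Gamma_ratio_eq_gammaNumProd_div, gammaNumProd_div_prod_gammaDen]
  field_simp

/-- (2^{n²+n}/n!)·∏_{j=0}^{n-1} Γ((n+3+j)/2)Γ(1/2)/(Γ((2+j)/2)Γ((1+j)/2)Γ((4+j)/2))
= 2^{n²+n}·∏_{k=1}^n Cat(k). -/
theorem stmt4 (n : ℕ) (hn : 0 < n) :
    ((2 : ℝ) ^ (n ^ 2 + n) / (n.factorial : ℝ)) *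
      ∏ j ∈ Finset.range n,
        Real.Gamma (((n : ℝ) + 3 + j) / 2) * Real.Gamma (1 / 2) /
          (Real.Gamma ((2 + (j : ℝ)) / 2) * Real.Gamma ((1 + (j : ℝ)) / 2) *
            Real.Gamma ((4 + (j : ℝ)) / 2)) =
      (2 : ℝ) ^ (n ^ 2 + n) * ∏ k ∈ Finset.Icc 1 n, catR k :=
  stmt4_general n
end
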